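/- Fix k ≥ 1 and let T^n denote the regular ordered tree of height n with branching number k. Every strong embedding g : T^l → T^n with l < n factors as g = g₂ ∘ g₁ where g₁ : T^l → T^{l+1} and g₂ : T^{l+1} → T^n are strong embeddings; moreover the same holds with 'strong embedding' replaced by 'strong leaf preserving embedding' throughout. -/

import Mathlib

noncomputable section
open scoped Classical

/-- A finite ordered tree: carrier `Fin card`, a tree partial order `le`
(any two elements have a meet, predecessors of any element are linearly
ordered), together with the induced lexicographic linear order `lex`
(a linear extension of `le` which does not interleave incomparable subtrees). -/
structure OTree where
  card : ℕ
  le : Fin card → Fin card → Prop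
  le_refl : ∀ v, le v v
  le_antisymm : ∀ v w, le v w → le w v → v = w
  le_trans : ∀ u v w, le u v → le v w → le u w
  pred_linear : ∀ v u w, le u v → le w v → le u w ∨ le w u
  meet_exists : ∀ v w, ∃ u, le u v ∧ le u w ∧ ∀ z, le z v → le z w → le z u
  lex : Fin card → Fin card → Prop
  lex_total : ∀ v w, lex v w ∨ lex w v
  lex_antisymm : ∀ v w, lex v w → lex w v → v = w
  lex_trans : ∀ u v w, lex u v → lex v w → lex u w
  le_lex : ∀ v w, le v w → lex v w
  lex_compat : ∀ v w v' w', ¬ le v w → ¬ le w v → lex v w → le v v' → le w w' → lex v' w'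

namespace OTree

variable (T : OTree)

/-- The meet (infimum, largest common predecessor) of two nodes. -/
def meet (v w : Fin T.card) : Fin T.card := Classical.choose (T.meet_exists v w)

/-- A leaf is a maximal node. -/
def Leaf (v : Fin T.card) : Prop := ∀ w, T.le v w → w = v

/-- `w` is an immediate successor of `v`. -/
def ImSucc (v w : Fin T.card) : Prop :=
  T.le v w ∧ v ≠ w ∧ ∀ u, T.le v u → T.le u w → u = v ∨ u = w

/-- The number of immediate successors of a node. -/
def imCard (v : Fin T.card) : ℕ := (Finset.univ.filter (fun w => T.ImSucc v w)).card

/-- The branching number `br(T)`: maximal number of immediate successors of a node. -/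
def br : ℕ := Finset.univ.sup (fun v => T.imCard v)

/-- The height of a node: the number of its predecessors (itself included). -/
def ht (v : Fin T.card) : ℕ := (Finset.univ.filter (fun u => T.le u v)).card

/-- The height of the tree. -/
def height : ℕ := Finset.univ.sup (fun v => T.ht v)

end OTree

/-- `f` is an embedding of ordered trees: an injective meet-morphism preserving
the lexicographic order, such that for every `v`, those immediate successors of `f v`
lying below an image of an immediate successor of `v` form a lex-initial segment
of the immediate successors of `f v`. -/
def IsEmb (S T : OTree) (f : Fin S.card → Fin T.card) : Prop :=
  Function.Injective f ∧
  (∀ v w, f (S.meet v w) = T.meet (f v) (f w)) ∧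
  (∀ v w, S.lex v w → T.lex (f v) (f w)) ∧
  (∀ v w₁ w₂, T.ImSucc (f v) w₁ → T.ImSucc (f v) w₂ → T.lex w₁ w₂ →
    (∃ v', S.ImSucc v v' ∧ T.le w₂ (f v')) → ∃ v', S.ImSucc v v' ∧ T.le w₁ (f v'))

/-- `f` maps leaves to leaves. -/
def LeafPres (S T : OTree) (f : Fin S.card → Fin T.card) : Prop :=
  ∀ v, S.Leaf v → T.Leaf (f v)

/-- `f` is strong: it maps nodes of equal height to nodes of equal height. -/
def Strong (S T : OTree) (f : Fin S.card → Fin T.card) : Prop :=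
  ∀ v w, S.ht v = S.ht w → T.ht (f v) = T.ht (f w)

/-- The linear (chain) ordered tree with `s` nodes, i.e. `[s] = {1,…,s}`. -/
def chainTree (s : ℕ) : OTree where
  card := s
  le := (· ≤ ·)
  le_refl := fun v => le_refl v
  le_antisymm := fun v w h1 h2 => le_antisymm h1 h2
  le_trans := fun u v w h1 h2 => le_trans h1 h2
  pred_linear := fun _ u w _ _ => le_total u w
  meet_exists := fun v w =>
    ⟨min v w, min_le_left v w, min_le_right v w, fun z h1 h2 => le_min h1 h2⟩
  lex := (· ≤ ·)
  lex_total := fun v w => le_total v w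
  lex_antisymm := fun v w h1 h2 => le_antisymm h1 h2
  lex_trans := fun u v w h1 h2 => le_trans h1 h2
  le_lex := fun _ _ h => h
  lex_compat := fun v w _ _ h1 h2 _ _ _ => absurd (le_total v w) (by tauto)

/-- `T` is the regular tree with branching number `k` and height `n`: every non-leaf
node has exactly `k` immediate successors and every leaf has height `n`. -/
def Regular (T : OTree) (k n : ℕ) : Prop :=
  (∀ v, ¬ T.Leaf v → T.imCard v = k) ∧ (∀ v, T.Leaf v → T.ht v = n) ∧ (T.card = 0 ↔ n = 0)

end

/-!
A strong embedding `g : T^l → T^n` sends level `j` to a level `h j`, so its image meets at most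
`l` of the `n` levels of `T^n`. Enlarge this set of levels by `n` and further levels to exactly
`l + 1` levels `h' 1 < ⋯ < h' (l + 1) = n`. Then build `G : T^{l+1} → T^n` top-down: the `s`-th
child of `w` goes to a node at level `h' (ht w + 1)` above the `s`-th child of `G w`, chosen on
a branch through the image of `g` whenever one is available. A map of this shape with strictly
increasing levels is a strong embedding, and following the branch of `g v` from the root shows
that `G` reaches every `g v`. Hence `g = G ∘ g₁`, and `g₁` inherits injectivity, meets, the
lexicographic order and strongness from `g` and `G`. As `n` is a level of `G`, it preserves
leaves, and so does `g₁` whenever `g` does.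
-/

noncomputable section

open scoped Classical

namespace OTree

variable {T : OTree}

theorem lex_refl (v : Fin T.card) : T.lex v v := (T.lex_total v v).elim id id

theorem meet_le_left (v w : Fin T.card) : T.le (T.meet v w) v :=
  (Classical.choose_spec (T.meet_exists v w)).1

theorem meet_le_right (v w : Fin T.card) : T.le (T.meet v w) w :=
  (Classical.choose_spec (T.meet_exists v w)).2.1

theorem le_meet {v w z : Fin T.card} (hv : T.le z v) (hw : T.le z w) : T.le z (T.meet v w) :=
  (Classical.choose_spec (T.meet_exists v w)).2.2 z hv hw

theorem meet_eq {u v w : Fin T.card} (hv : T.le u v) (hw : T.le u w)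
    (h : ∀ z, T.le z v → T.le z w → T.le z u) : T.meet v w = u :=
  T.le_antisymm _ _ (h _ (meet_le_left v w) (meet_le_right v w)) (le_meet hv hw)

theorem meet_eq_left {v w : Fin T.card} (h : T.le v w) : T.meet v w = v :=
  meet_eq (T.le_refl v) h fun _ hz _ => hz

theorem meet_eq_right {v w : Fin T.card} (h : T.le w v) : T.meet v w = w :=
  meet_eq h (T.le_refl w) fun _ _ hz => hz

theorem one_le_ht (v : Fin T.card) : 1 ≤ T.ht v :=
  Finset.card_pos.2 ⟨v, by simp [T.le_refl v]⟩

theorem ht_le_ht {u v : Fin T.card} (h : T.le u v) : T.ht u ≤ T.ht v :=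
  Finset.card_le_card fun z hz => by
    simp only [Finset.mem_filter, Finset.mem_univ, true_and] at hz ⊢
    exact T.le_trans _ _ _ hz h

theorem ht_lt_ht {u v : Fin T.card} (h : T.le u v) (hne : u ≠ v) : T.ht u < T.ht v := by
  refine Finset.card_lt_card ⟨fun z hz => ?_, fun hsub => ?_⟩
  · simp only [Finset.mem_filter, Finset.mem_univ, true_and] at hz ⊢
    exact T.le_trans _ _ _ hz h
  · have := hsub (by simp [T.le_refl v] : v ∈ Finset.univ.filter (T.le · v))
    simp only [Finset.mem_filter, Finset.mem_univ, true_and] at this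
    exact hne (T.le_antisymm _ _ h this)

theorem eq_of_le_of_ht_le {u v : Fin T.card} (h : T.le u v) (hh : T.ht v ≤ T.ht u) : u = v :=
  by_contra fun hne => (ht_lt_ht h hne).not_ge hh

theorem not_le_of_ht_le {u v : Fin T.card} (hne : u ≠ v) (h : T.ht v ≤ T.ht u) : ¬ T.le u v :=
  fun hle => hne (eq_of_le_of_ht_le hle h)

theorem le_of_ht_le_of_le_of_le {u w x : Fin T.card} (hu : T.le u x) (hw : T.le w x)
    (h : T.ht u ≤ T.ht w) : T.le u w := by
  rcases T.pred_linear x u w hu hw with h' | h'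
  · exact h'
  · rw [eq_of_le_of_ht_le h' h]; exact T.le_refl _

theorem le_of_ht_eq_one {r : Fin T.card} (hr : T.ht r = 1) (v : Fin T.card) : T.le r v := by
  have := one_le_ht (T.meet r v)
  rw [← eq_of_le_of_ht_le (meet_le_left r v) (by omega)]
  exact meet_le_right r v

/-- The predecessors of `v` are a chain, so `ht` maps them bijectively onto `[1, ht v]`. -/
theorem exists_le_ht_eq {v : Fin T.card} {m : ℕ} (h1 : 1 ≤ m) (h2 : m ≤ T.ht v) :
    ∃ u, T.le u v ∧ T.ht u = m := by
  set A := Finset.univ.filter (T.le · v)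
  have hinj : Set.InjOn T.ht A := by
    intro a ha b hb hab
    simp only [A, Finset.coe_filter, Finset.mem_univ, true_and, Set.mem_ofPred_eq] at ha hb
    rcases T.pred_linear v a b ha hb with h | h
    · exact eq_of_le_of_ht_le h hab.ge
    · exact (eq_of_le_of_ht_le h hab.le).symm
  have hsub : A.image T.ht ⊆ Finset.Icc 1 (T.ht v) := by
    simp only [Finset.image_subset_iff, Finset.mem_Icc]
    intro a ha
    simp only [A, Finset.mem_filter, Finset.mem_univ, true_and] at ha
    exact ⟨one_le_ht a, ht_le_ht ha⟩
  have himage : A.image T.ht = Finset.Icc 1 (T.ht v) :=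
    Finset.eq_of_subset_of_card_le hsub (by simp [Finset.card_image_of_injOn hinj, A, ht])
  obtain ⟨u, hu, rfl⟩ := Finset.mem_image.1 (himage ▸ Finset.mem_Icc.2 ⟨h1, h2⟩)
  exact ⟨u, by simpa [A] using hu, rfl⟩

/-- The ancestor of `v` at height `m`; it is `v` itself when `m ∉ [1, ht v]`. -/
def anc (T : OTree) (v : Fin T.card) (m : ℕ) : Fin T.card :=
  if h : 1 ≤ m ∧ m ≤ T.ht v then Classical.choose (exists_le_ht_eq h.1 h.2) else v

theorem anc_le (v : Fin T.card) (m : ℕ) : T.le (T.anc v m) v := by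
  unfold anc
  split_ifs with h
  · exact (Classical.choose_spec (exists_le_ht_eq h.1 h.2)).1
  · exact T.le_refl v

theorem ht_anc {v : Fin T.card} {m : ℕ} (h1 : 1 ≤ m) (h2 : m ≤ T.ht v) :
    T.ht (T.anc v m) = m := by
  rw [anc, dif_pos ⟨h1, h2⟩]
  exact (Classical.choose_spec (exists_le_ht_eq h1 h2)).2

theorem anc_eq {v u : Fin T.card} (hu : T.le u v) : T.anc v (T.ht u) = u := by
  have hh := ht_anc (one_le_ht u) (ht_le_ht hu)
  rcases T.pred_linear v _ _ (anc_le v (T.ht u)) hu with h | h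
  · exact eq_of_le_of_ht_le h hh.ge
  · exact (eq_of_le_of_ht_le h hh.le).symm

theorem anc_self (v : Fin T.card) : T.anc v (T.ht v) = v := anc_eq (T.le_refl v)

theorem anc_eq_anc_of_le {u v : Fin T.card} (huv : T.le u v) {m : ℕ} (h1 : 1 ≤ m)
    (h2 : m ≤ T.ht u) : T.anc v m = T.anc u m := by
  conv_lhs => rw [← ht_anc h1 h2]
  exact anc_eq (T.le_trans _ _ _ (anc_le u m) huv)

theorem le_anc {u v : Fin T.card} {m : ℕ} (huv : T.le u v) (hu : T.ht u ≤ m)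
    (hm : m ≤ T.ht v) : T.le u (T.anc v m) :=
  le_of_ht_le_of_le_of_le huv (anc_le v m) (by rwa [ht_anc (Nat.le_trans (one_le_ht u) hu) hm])

theorem imSucc_iff {v w : Fin T.card} : T.ImSucc v w ↔ T.le v w ∧ T.ht w = T.ht v + 1 := by
  constructor
  · rintro ⟨hle, hne, hmax⟩
    have hlt := ht_lt_ht hle hne
    refine ⟨hle, Nat.le_antisymm (not_lt.1 fun h => ?_) hlt⟩
    obtain ⟨u, huw, hu⟩ := exists_le_ht_eq (v := w) (m := T.ht v + 1) (by omega) h.le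
    rcases hmax u (le_of_ht_le_of_le_of_le hle huw (by omega)) huw with rfl | rfl <;> omega
  · rintro ⟨hle, hht⟩
    refine ⟨hle, by rintro rfl; omega, fun u hvu huw => ?_⟩
    have h1 := ht_le_ht hvu
    have h2 := ht_le_ht huw
    rcases (by omega : T.ht u ≤ T.ht v ∨ T.ht w ≤ T.ht u) with h | h
    · exact Or.inl (eq_of_le_of_ht_le hvu h).symm
    · exact Or.inr (eq_of_le_of_ht_le huw h)

theorem ImSucc.le {v w : Fin T.card} (h : T.ImSucc v w) : T.le v w := h.1

theorem ImSucc.ht_eq {v w : Fin T.card} (h : T.ImSucc v w) : T.ht w = T.ht v + 1 :=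
  (imSucc_iff.1 h).2

/-- The parent of `v`; it is `v` itself for the root. -/
def parent (T : OTree) (v : Fin T.card) : Fin T.card := T.anc v (T.ht v - 1)

theorem parent_imSucc {v : Fin T.card} (h : 2 ≤ T.ht v) : T.ImSucc (T.parent v) v :=
  imSucc_iff.2 ⟨anc_le v _, by rw [parent, ht_anc (by omega) (by omega)]; omega⟩

theorem ImSucc.parent_eq {v w : Fin T.card} (h : T.ImSucc v w) : T.parent w = v := by
  rw [parent, h.ht_eq, Nat.add_sub_cancel]
  exact anc_eq h.le

theorem exists_le_leaf (v : Fin T.card) : ∃ m, T.le v m ∧ T.Leaf m := by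
  obtain ⟨m, hm, hmax⟩ := Finset.exists_max_image (Finset.univ.filter (T.le v ·)) T.ht
    ⟨v, by simp [T.le_refl v]⟩
  simp only [Finset.mem_filter, Finset.mem_univ, true_and] at hm hmax
  exact ⟨m, hm, fun w hw => (eq_of_le_of_ht_le hw (hmax w (T.le_trans _ _ _ hm hw))).symm⟩

instance (T : OTree) : IsTrans (Fin T.card) T.lex := ⟨T.lex_trans⟩
instance (T : OTree) : Std.Antisymm T.lex := ⟨T.lex_antisymm⟩
instance (T : OTree) : Std.Total T.lex := ⟨T.lex_total⟩

def childList (T : OTree) (v : Fin T.card) : List (Fin T.card) :=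
  (Finset.univ.filter (T.ImSucc v)).sort T.lex

theorem mem_childList {v w : Fin T.card} : w ∈ T.childList v ↔ T.ImSucc v w := by
  simp [childList]

theorem length_childList (v : Fin T.card) : (T.childList v).length = T.imCard v := by
  simp [childList, imCard]

/-- The `j`-th immediate successor of `v` (counting from `0`); it is `v` itself when
`T.imCard v ≤ j`. -/
def nthChild (T : OTree) (v : Fin T.card) (j : ℕ) : Fin T.card := (T.childList v).getD j v

def slotIdx (T : OTree) (v w : Fin T.card) : ℕ := (T.childList v).idxOf w

theorem nthChild_eq_getElem {v : Fin T.card} {j : ℕ} (hj : j < T.imCard v) :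
    T.nthChild v j = (T.childList v)[j]'(by rwa [length_childList]) :=
  List.getD_eq_getElem _ _ _

theorem nthChild_imSucc {v : Fin T.card} {j : ℕ} (hj : j < T.imCard v) :
    T.ImSucc v (T.nthChild v j) := by
  rw [nthChild_eq_getElem hj, ← mem_childList]
  exact List.getElem_mem _

theorem ht_nthChild {v : Fin T.card} {j : ℕ} (hj : j < T.imCard v) :
    T.ht (T.nthChild v j) = T.ht v + 1 :=
  (nthChild_imSucc hj).ht_eq

theorem ht_nthChild_le (v : Fin T.card) (j : ℕ) : T.ht (T.nthChild v j) ≤ T.ht v + 1 := by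
  by_cases hj : j < T.imCard v
  · exact (ht_nthChild hj).le
  · rw [nthChild, List.getD_eq_default _ _ (by rw [length_childList]; omega)]
    omega

theorem nthChild_lex {v : Fin T.card} {i j : ℕ} (hij : i < j) (hj : j < T.imCard v) :
    T.lex (T.nthChild v i) (T.nthChild v j) ∧ T.nthChild v i ≠ T.nthChild v j := by
  rw [nthChild_eq_getElem (hij.trans hj), nthChild_eq_getElem hj]
  refine ⟨List.Pairwise.rel_get_of_lt (Finset.pairwise_sort _ _) hij, fun h => ?_⟩
  have := (List.Nodup.getElem_inj_iff (Finset.sort_nodup _ _)).1 h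
  omega

theorem slotIdx_lt {v w : Fin T.card} (h : T.ImSucc v w) : T.slotIdx v w < T.imCard v := by
  rw [← length_childList]
  exact List.idxOf_lt_length_iff.2 (mem_childList.2 h)

theorem nthChild_slotIdx {v w : Fin T.card} (h : T.ImSucc v w) :
    T.nthChild v (T.slotIdx v w) = w := by
  rw [nthChild_eq_getElem (slotIdx_lt h)]
  exact List.getElem_idxOf _

theorem slotIdx_nthChild {v : Fin T.card} {j : ℕ} (hj : j < T.imCard v) :
    T.slotIdx v (T.nthChild v j) = j := by
  rw [nthChild_eq_getElem hj]
  exact (Finset.sort_nodup _ _).idxOf_getElem _ _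

theorem slotIdx_lt_slotIdx {p w w' : Fin T.card} (hw : T.ImSucc p w) (hw' : T.ImSucc p w')
    (hne : w ≠ w') (hlex : T.lex w w') : T.slotIdx p w < T.slotIdx p w' := by
  refine lt_of_not_ge fun hle => ?_
  rcases hle.lt_or_eq with hlt | heq
  · have := (nthChild_lex hlt (slotIdx_lt hw)).1
    rw [nthChild_slotIdx hw, nthChild_slotIdx hw'] at this
    exact hne (T.lex_antisymm _ _ hlex this)
  · exact hne (by rw [← nthChild_slotIdx hw, ← nthChild_slotIdx hw', heq])

theorem le_of_le_of_le_of_imSucc {p c c' d d' z : Fin T.card}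
    (hc : T.ImSucc p c) (hc' : T.ImSucc p c') (hne : c ≠ c')
    (hd : T.le c d) (hd' : T.le c' d') (hz : T.le z d) (hz' : T.le z d') : T.le z p := by
  rcases T.pred_linear d z p hz (T.le_trans _ _ _ hc.le hd) with h | h
  · exact h
  · by_cases hzp : z = p
    · exact hzp ▸ T.le_refl z
    have hz1 : T.ht p + 1 ≤ T.ht z := ht_lt_ht h (Ne.symm hzp)
    refine absurd ?_ hne
    calc c = T.anc d (T.ht p + 1) := by rw [← hc.ht_eq, anc_eq hd]
      _ = T.anc z (T.ht p + 1) := anc_eq_anc_of_le hz (by omega) hz1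
      _ = T.anc d' (T.ht p + 1) := (anc_eq_anc_of_le hz' (by omega) hz1).symm
      _ = c' := by rw [← hc'.ht_eq, anc_eq hd']

theorem meet_eq_of_imSucc {p c c' : Fin T.card} (hc : T.ImSucc p c) (hc' : T.ImSucc p c')
    (hne : c ≠ c') : T.meet c c' = p :=
  meet_eq hc.le hc'.le fun _ hz hz' =>
    le_of_le_of_le_of_imSucc hc hc' hne (T.le_refl c) (T.le_refl c') hz hz'

theorem exists_imSucc_meet {u w : Fin T.card} (h1 : ¬ T.le u w) (h2 : ¬ T.le w u) :
    ∃ c c', T.ImSucc (T.meet u w) c ∧ T.ImSucc (T.meet u w) c' ∧ c ≠ c' ∧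
      T.le c u ∧ T.le c' w := by
  set d := T.meet u w with hd
  have hdu : T.le d u := meet_le_left u w
  have hdw : T.le d w := meet_le_right u w
  have hhu := ht_lt_ht hdu fun h => h1 (h ▸ hdw)
  have hhw := ht_lt_ht hdw fun h => h2 (h ▸ hdu)
  have hc : T.ImSucc d (T.anc u (T.ht d + 1)) :=
    imSucc_iff.2 ⟨le_anc hdu (by omega) hhu, ht_anc (by omega) hhu⟩
  have hc' : T.ImSucc d (T.anc w (T.ht d + 1)) :=
    imSucc_iff.2 ⟨le_anc hdw (by omega) hhw, ht_anc (by omega) hhw⟩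
  refine ⟨_, _, hc, hc', fun h => ?_, anc_le u _, anc_le w _⟩
  have := ht_le_ht (le_meet (anc_le u _) (h ▸ anc_le w _))
  rw [← hd, hc.ht_eq] at this
  omega

end OTree

namespace Regular

open OTree

variable {T : OTree} {k n : ℕ}

theorem ht_le (hT : Regular T k n) (v : Fin T.card) : T.ht v ≤ n := by
  obtain ⟨m, hvm, hm⟩ := exists_le_leaf v
  exact hT.2.1 m hm ▸ ht_le_ht hvm

theorem leaf_iff (hT : Regular T k n) {v : Fin T.card} : T.Leaf v ↔ T.ht v = n := by
  refine ⟨hT.2.1 v, fun h => ?_⟩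
  obtain ⟨m, hvm, hm⟩ := exists_le_leaf v
  rwa [eq_of_le_of_ht_le hvm (by rw [h, hT.2.1 m hm])]

theorem imCard_eq (hT : Regular T k n) {v : Fin T.card} (h : T.ht v < n) :
    T.imCard v = k :=
  hT.1 v fun hv => by rw [hT.leaf_iff] at hv; omega

theorem imCard_eq_of_imSucc (hT : Regular T k n) {v w : Fin T.card}
    (h : T.ImSucc v w) : T.imCard v = k :=
  hT.imCard_eq (by have := hT.ht_le w; rw [h.ht_eq] at this; omega)

theorem card_ne_zero (hT : Regular T k n) (hn : n ≠ 0) : T.card ≠ 0 :=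
  fun h => hn (hT.2.2.1 h)

end Regular

theorem exists_strictMonoOn_of_card_le {A : Finset ℕ} {l n : ℕ} (hA : A ⊆ Finset.Icc 1 n)
    (hcard : A.card ≤ l) (hln : l < n) :
    ∃ h' : ℕ → ℕ, StrictMonoOn h' (Set.Icc 1 (l + 1)) ∧
      Set.MapsTo h' (Set.Icc 1 (l + 1)) (Set.Icc 1 n) ∧
      (∀ a ∈ A, ∃ j ∈ Set.Icc 1 (l + 1), h' j = a) ∧ h' (l + 1) = n := by
  obtain ⟨B, hAB, hB, hBcard⟩ := Finset.exists_subsuperset_card_eq (n := l + 1)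
    (Finset.insert_subset (Finset.mem_Icc.2 ⟨by omega, le_rfl⟩) hA)
    (Finset.card_insert_le n A |>.trans (by omega)) (by simp only [Nat.card_Icc]; omega)
  set e := B.orderEmbOfFin hBcard
  set h' : ℕ → ℕ := fun j => if hj : j - 1 < l + 1 then e ⟨j - 1, hj⟩ else 0
  have he : ∀ j (hj : j ∈ Set.Icc 1 (l + 1)), h' j = e ⟨j - 1, by have := hj.2; omega⟩ :=
    fun j hj => dif_pos _
  have hmono : StrictMonoOn h' (Set.Icc 1 (l + 1)) := fun i hi j hj hij => by
    rw [he i hi, he j hj]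
    exact e.strictMono (Fin.mk_lt_mk.2 (by have := hi.1; omega))
  have hrange : ∀ b ∈ B, ∃ j ∈ Set.Icc 1 (l + 1), h' j = b := fun b hb => by
    obtain ⟨x, rfl⟩ : b ∈ Set.range e := by rwa [Finset.range_orderEmbOfFin]
    exact ⟨x + 1, ⟨by omega, by omega⟩, by rw [he _ ⟨by omega, by omega⟩]; rfl⟩
  have hmaps : Set.MapsTo h' (Set.Icc 1 (l + 1)) (Set.Icc 1 n) := fun j hj => by
    rw [he j hj]
    simpa using hB (B.orderEmbOfFin_mem hBcard _)
  obtain ⟨j, hj, hjn⟩ := hrange n (hAB (Finset.mem_insert_self n A))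
  refine ⟨h', hmono, hmaps, fun a ha => hrange a (hAB (Finset.mem_insert_of_mem ha)), ?_⟩
  have htop : l + 1 ∈ Set.Icc 1 (l + 1) := ⟨by omega, le_rfl⟩
  exact le_antisymm (hmaps htop).2 (hjn ▸ hmono.monotoneOn hj htop hj.2)

namespace OTree

section

variable {T : OTree} {k n : ℕ}

theorem le_of_map_meet {S : OTree} {f : Fin S.card → Fin T.card}
    (hf : ∀ v w, f (S.meet v w) = T.meet (f v) (f w)) {a b : Fin S.card} (h : S.le a b) :
    T.le (f a) (f b) := by
  rw [← meet_eq_left h, hf]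
  exact meet_le_right _ _

/-- The initial-segment clause of `IsEmb` comes for free: `c ↦ T.anc (f c) (T.ht (f v) + 1)`
injects the children of `v` into those of `f v`, and both sets have `k` elements. -/
theorem exists_imSucc_le_of_injective {S : OTree} {L : ℕ} (hS : Regular S k L)
    (hT : Regular T k n) {f : Fin S.card → Fin T.card} (hinj : Function.Injective f)
    (hf : ∀ v w, f (S.meet v w) = T.meet (f v) (f w)) (v : Fin S.card) (w₁ : Fin T.card)
    (hw₁ : T.ImSucc (f v) w₁) (hv : ∃ v', S.ImSucc v v') :
    ∃ v', S.ImSucc v v' ∧ T.le w₁ (f v') := by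
  obtain ⟨u, hu⟩ := hv
  have hlt : ∀ c, S.ImSucc v c → T.ht (f v) < T.ht (f c) := fun c hc =>
    ht_lt_ht (le_of_map_meet hf hc.le) fun h => hc.2.1 (hinj h)
  let e c := T.anc (f c) (T.ht (f v) + 1)
  have he : ∀ c ∈ Finset.univ.filter (S.ImSucc v),
      e c ∈ Finset.univ.filter (T.ImSucc (f v)) := by
    simp only [Finset.mem_filter, Finset.mem_univ, true_and]
    exact fun c hc => imSucc_iff.2 ⟨le_anc (le_of_map_meet hf hc.le) (Nat.le_succ _) (hlt c hc),
      ht_anc (by omega) (hlt c hc)⟩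
  have heinj : ∀ c c', c ∈ Finset.univ.filter (S.ImSucc v) →
      c' ∈ Finset.univ.filter (S.ImSucc v) → e c = e c' → c = c' := by
    simp only [Finset.mem_filter, Finset.mem_univ, true_and]
    refine fun c c' hc hc' hee => by_contra fun hne => ?_
    have h := ht_le_ht
      (le_meet (anc_le (f c) _) (show T.le (e c) (f c') from hee ▸ anc_le _ _))
    rw [← hf, meet_eq_of_imSucc hc hc' hne, ht_anc (by omega) (hlt c hc)] at h
    omega
  have hcard : (Finset.univ.filter (T.ImSucc (f v))).card ≤
      (Finset.univ.filter (S.ImSucc v)).card := by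
    change T.imCard (f v) ≤ S.imCard v
    rw [hS.imCard_eq_of_imSucc hu, hT.imCard_eq_of_imSucc hw₁]
  obtain ⟨c, hc, hec⟩ :=
    Finset.surj_on_of_inj_on_of_card_le (fun c _ => e c) he heinj hcard w₁ (by simpa using hw₁)
  exact ⟨c, by simpa using hc, hec ▸ anc_le _ _⟩

theorem isEmb_of_injective {S : OTree} {L : ℕ} (hS : Regular S k L) (hT : Regular T k n)
    {f : Fin S.card → Fin T.card} (hinj : Function.Injective f)
    (hmeet : ∀ v w, f (S.meet v w) = T.meet (f v) (f w))
    (hlex : ∀ v w, S.lex v w → T.lex (f v) (f w)) : IsEmb S T f :=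
  ⟨hinj, hmeet, hlex, fun v w₁ _ hw₁ _ _ ⟨v', hv', _⟩ =>
    exists_imSucc_le_of_injective hS hT hinj hmeet v w₁ hw₁ ⟨v', hv'⟩⟩

end

structure SlotFaithful (S T : OTree) (H : ℕ → ℕ) (G : Fin S.card → Fin T.card) : Prop where
  ht_map : ∀ w, T.ht (G w) = H (S.ht w)
  nthChild_le : ∀ p w, S.ImSucc p w → T.le (T.nthChild (G p) (S.slotIdx p w)) (G w)

namespace SlotFaithful

variable {S T : OTree} {k L n : ℕ} {H : ℕ → ℕ} {G : Fin S.card → Fin T.card}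

theorem ht_lt_of_ht_lt (hG : SlotFaithful S T H G) (hS : Regular S k L)
    (hH : StrictMonoOn H (Set.Icc 1 L)) {u w : Fin S.card} (h : S.ht u < S.ht w) :
    T.ht (G u) < T.ht (G w) := by
  rw [hG.ht_map, hG.ht_map]
  exact hH ⟨one_le_ht u, hS.ht_le u⟩ ⟨one_le_ht w, hS.ht_le w⟩ h

theorem slotIdx_lt_imCard (hG : SlotFaithful S T H G) (hS : Regular S k L)
    (hT : Regular T k n) (hH : StrictMonoOn H (Set.Icc 1 L)) {p w : Fin S.card}
    (hpw : S.ImSucc p w) : S.slotIdx p w < T.imCard (G p) := by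
  have hlt := hG.ht_lt_of_ht_lt hS hH (by rw [hpw.ht_eq]; omega : S.ht p < S.ht w)
  rw [hT.imCard_eq (lt_of_lt_of_le hlt (hT.ht_le _)), ← hS.imCard_eq_of_imSucc hpw]
  exact slotIdx_lt hpw

theorem imSucc_nthChild (hG : SlotFaithful S T H G) (hS : Regular S k L) (hT : Regular T k n)
    (hH : StrictMonoOn H (Set.Icc 1 L)) {p w : Fin S.card} (hpw : S.ImSucc p w) :
    T.ImSucc (G p) (T.nthChild (G p) (S.slotIdx p w)) :=
  nthChild_imSucc (hG.slotIdx_lt_imCard hS hT hH hpw)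

theorem le_of_imSucc (hG : SlotFaithful S T H G) (hS : Regular S k L) (hT : Regular T k n)
    (hH : StrictMonoOn H (Set.Icc 1 L)) {p w : Fin S.card} (hpw : S.ImSucc p w) :
    T.le (G p) (G w) :=
  T.le_trans _ _ _ (hG.imSucc_nthChild hS hT hH hpw).le (hG.nthChild_le p w hpw)

theorem le_of_le (hG : SlotFaithful S T H G) (hS : Regular S k L) (hT : Regular T k n)
    (hH : StrictMonoOn H (Set.Icc 1 L)) {u w : Fin S.card} (h : S.le u w) :
    T.le (G u) (G w) := by
  induction hw : S.ht w using Nat.strong_induction_on generalizing w with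
  | _ m ih =>
    by_cases huw : u = w
    · exact huw ▸ T.le_refl _
    have hlt := OTree.ht_lt_ht h huw
    have hpw := parent_imSucc (v := w) (by have := one_le_ht u; omega)
    have hup : S.le u (S.parent w) :=
      le_of_ht_le_of_le_of_le h hpw.le (by have := hpw.ht_eq; omega)
    exact T.le_trans _ _ _ (ih _ (by have := hpw.ht_eq; omega) hup rfl)
      (hG.le_of_imSucc hS hT hH hpw)

theorem le_of_le_of_le (hG : SlotFaithful S T H G) (hS : Regular S k L) (hT : Regular T k n)
    (hH : StrictMonoOn H (Set.Icc 1 L)) {p w w' : Fin S.card} {z : Fin T.card}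
    (hw : S.ImSucc p w) (hw' : S.ImSucc p w') (hne : w ≠ w') (hz : T.le z (G w))
    (hz' : T.le z (G w')) : T.le z (G p) := by
  refine le_of_le_of_le_of_imSucc (hG.imSucc_nthChild hS hT hH hw)
    (hG.imSucc_nthChild hS hT hH hw') (fun h => hne ?_) (hG.nthChild_le p w hw)
    (hG.nthChild_le p w' hw') hz hz'
  have hs : S.slotIdx p w = S.slotIdx p w' := by
    rw [← slotIdx_nthChild (hG.slotIdx_lt_imCard hS hT hH hw), h,
      slotIdx_nthChild (hG.slotIdx_lt_imCard hS hT hH hw')]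
  rw [← nthChild_slotIdx hw, ← nthChild_slotIdx hw', hs]

theorem false_of_le_of_le (hG : SlotFaithful S T H G) (hS : Regular S k L)
    (hT : Regular T k n) (hH : StrictMonoOn H (Set.Icc 1 L)) {p w w' : Fin S.card}
    {x : Fin T.card} (hw : S.ImSucc p w) (hw' : S.ImSucc p w') (hne : w ≠ w')
    (hx : T.le (G w) x) (hx' : T.le (G w') x) : False := by
  have hle := le_of_ht_le_of_le_of_le hx hx'
    (by rw [hG.ht_map, hG.ht_map, hw.ht_eq, hw'.ht_eq])
  have hlt := hG.ht_lt_of_ht_lt hS hH (by rw [hw.ht_eq]; omega : S.ht p < S.ht w)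
  have := ht_le_ht (hG.le_of_le_of_le hS hT hH hw hw' hne (T.le_refl _) hle)
  omega

theorem injective (hG : SlotFaithful S T H G) (hS : Regular S k L) (hT : Regular T k n)
    (hH : StrictMonoOn H (Set.Icc 1 L)) : Function.Injective G := by
  intro u w heq
  by_contra hne
  by_cases huw : S.le u w
  · exact (hG.ht_lt_of_ht_lt hS hH (OTree.ht_lt_ht huw hne)).ne (by rw [heq])
  by_cases hwu : S.le w u
  · exact (hG.ht_lt_of_ht_lt hS hH (OTree.ht_lt_ht hwu (Ne.symm hne))).ne (by rw [heq])
  obtain ⟨c, c', hc, hc', hcc, hcu, hcw⟩ := exists_imSucc_meet huw hwu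
  exact hG.false_of_le_of_le hS hT hH hc hc' hcc (heq ▸ hG.le_of_le hS hT hH hcu)
    (hG.le_of_le hS hT hH hcw)

theorem map_meet (hG : SlotFaithful S T H G) (hS : Regular S k L) (hT : Regular T k n)
    (hH : StrictMonoOn H (Set.Icc 1 L)) (u w : Fin S.card) :
    G (S.meet u w) = T.meet (G u) (G w) := by
  by_cases huw : S.le u w
  · rw [meet_eq_left huw, meet_eq_left (hG.le_of_le hS hT hH huw)]
  by_cases hwu : S.le w u
  · rw [meet_eq_right hwu, meet_eq_right (hG.le_of_le hS hT hH hwu)]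
  obtain ⟨c, c', hc, hc', hcc, hcu, hcw⟩ := exists_imSucc_meet huw hwu
  have hGc := hG.le_of_le hS hT hH hcu
  have hGc' := hG.le_of_le hS hT hH hcw
  refine (meet_eq (hG.le_of_le hS hT hH (meet_le_left u w))
    (hG.le_of_le hS hT hH (meet_le_right u w)) fun z hzu hzw => ?_).symm
  rcases T.pred_linear _ z _ hzu hGc with h | h
  · rcases T.pred_linear _ z _ hzw hGc' with h' | h'
    · exact hG.le_of_le_of_le hS hT hH hc hc' hcc h h'
    · exact (hG.false_of_le_of_le hS hT hH hc' hc (Ne.symm hcc) (T.le_trans _ _ _ h' hzu)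
        hGc).elim
  · exact (hG.false_of_le_of_le hS hT hH hc hc' hcc (T.le_trans _ _ _ h hzw) hGc').elim

theorem map_lex (hG : SlotFaithful S T H G) (hS : Regular S k L) (hT : Regular T k n)
    (hH : StrictMonoOn H (Set.Icc 1 L)) {u w : Fin S.card} (hlex : S.lex u w) :
    T.lex (G u) (G w) := by
  by_cases heq : u = w
  · exact heq ▸ lex_refl _
  by_cases huw : S.le u w
  · exact T.le_lex _ _ (hG.le_of_le hS hT hH huw)
  by_cases hwu : S.le w u
  · exact (heq (S.lex_antisymm _ _ hlex (S.le_lex _ _ hwu))).elim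
  obtain ⟨c, c', hc, hc', hcc, hcu, hcw⟩ := exists_imSucc_meet huw hwu
  have hht : S.ht c = S.ht c' := by rw [hc.ht_eq, hc'.ht_eq]
  have hclex : S.lex c c' := (S.lex_total c c').resolve_right fun h => heq <|
    S.lex_antisymm _ _ hlex <| S.lex_compat c' c w u (not_le_of_ht_le (Ne.symm hcc) hht.le)
      (not_le_of_ht_le hcc hht.ge) h hcw hcu
  obtain ⟨hlex', hne'⟩ := nthChild_lex (slotIdx_lt_slotIdx hc hc' hcc hclex)
    (hG.slotIdx_lt_imCard hS hT hH hc')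
  have hht' := (hG.imSucc_nthChild hS hT hH hc).ht_eq.trans
    (hG.imSucc_nthChild hS hT hH hc').ht_eq.symm
  exact T.lex_compat _ _ _ _ (not_le_of_ht_le hne' hht'.ge) (not_le_of_ht_le hne'.symm hht'.le)
    hlex' (T.le_trans _ _ _ (hG.nthChild_le _ _ hc) (hG.le_of_le hS hT hH hcu))
    (T.le_trans _ _ _ (hG.nthChild_le _ _ hc') (hG.le_of_le hS hT hH hcw))

theorem isEmb (hG : SlotFaithful S T H G) (hS : Regular S k L) (hT : Regular T k n)
    (hH : StrictMonoOn H (Set.Icc 1 L)) : IsEmb S T G :=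
  isEmb_of_injective hS hT (hG.injective hS hT hH) (hG.map_meet hS hT hH)
    fun _ _ => hG.map_lex hS hT hH

end SlotFaithful

theorem exists_isEmb_comp_eq {A B C : OTree} {k l m : ℕ} (hA : Regular A k l)
    (hB : Regular B k m)
    {g : Fin A.card → Fin C.card} {G : Fin B.card → Fin C.card} (hg : IsEmb A C g)
    (hG : IsEmb B C G) (hrange : ∀ v, ∃ w, G w = g v) :
    ∃ g₁ : Fin A.card → Fin B.card, IsEmb A B g₁ ∧ g = G ∘ g₁ := by
  choose g₁ hg₁ using hrange
  have hcomp : g = G ∘ g₁ := funext fun v => (hg₁ v).symm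
  refine ⟨g₁, isEmb_of_injective hA hB (fun a b h => hg.1 (by simp [hcomp, h]))
    (fun v w => hG.1 (by simp only [hg₁, hG.2.1, hg.2.1])) fun v w h => ?_, hcomp⟩
  rcases B.lex_total (g₁ v) (g₁ w) with h' | h'
  · exact h'
  · obtain rfl : v = w := hg.1 <|
      C.lex_antisymm _ _ (hg.2.2.1 v w h) (by simpa only [hg₁] using hG.2.2.1 _ _ h')
    exact h'

section LevelAbove

variable {S T : OTree} {k n : ℕ} (g : Fin S.card → Fin T.card)

/-- A node at height `m` above `c`, taken on a branch through the image of `g` whenever such a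
branch reaches height `m`. -/
def levelAbove (c : Fin T.card) (m : ℕ) : Fin T.card :=
  T.anc (if h : ∃ u, T.le c (g u) ∧ m ≤ T.ht (g u) then g h.choose
    else (exists_le_leaf c).choose) m

variable {g}

theorem ht_levelAbove_and_le (hT : Regular T k n) (c : Fin T.card) {m : ℕ} (h1 : 1 ≤ m)
    (hm : m ≤ n) :
    T.ht (levelAbove g c m) = m ∧ (T.ht c ≤ m → T.le c (levelAbove g c m)) := by
  suffices ∃ x, levelAbove g c m = T.anc x m ∧ T.le c x ∧ m ≤ T.ht x by
    obtain ⟨x, hx, hcx, hmx⟩ := this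
    exact ⟨hx ▸ ht_anc h1 hmx, fun hc => hx ▸ le_anc hcx hc hmx⟩
  unfold levelAbove
  split_ifs with h
  · exact ⟨_, rfl, h.choose_spec⟩
  · obtain ⟨hcx, hx⟩ := (exists_le_leaf c).choose_spec
    exact ⟨_, rfl, hcx, by rw [hT.leaf_iff.1 hx]; exact hm⟩

/-- Two branches through the image of `g` part at the image of a meet, which by `hgap` lies at
height `≥ m`. -/
theorem levelAbove_eq (hg : ∀ u v, g (S.meet u v) = T.meet (g u) (g v)) {c : Fin T.card}
    {m : ℕ} {v : Fin S.card} (h1 : 1 ≤ m) (hcv : T.le c (g v)) (hm : m ≤ T.ht (g v))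
    (hgap : ∀ u, T.ht c ≤ T.ht (g u) → m ≤ T.ht (g u)) :
    levelAbove g c m = T.anc (g v) m := by
  have h : ∃ u, T.le c (g u) ∧ m ≤ T.ht (g u) := ⟨v, hcv, hm⟩
  obtain ⟨hcu, -⟩ := h.choose_spec
  rw [levelAbove, dif_pos h]
  have hc : T.le c (g (S.meet h.choose v)) := hg _ _ ▸ le_meet hcu hcv
  have hmeet := hgap _ (ht_le_ht hc)
  rw [anc_eq_anc_of_le (le_of_map_meet hg (meet_le_left _ v)) h1 hmeet,
    anc_eq_anc_of_le (le_of_map_meet hg (meet_le_right _ v)) h1 hmeet]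

end LevelAbove

section Extension

variable {k l n : ℕ} {Tl Tl1 Tn : OTree} (g : Fin Tl.card → Fin Tn.card) (h' : ℕ → ℕ)
  (r : Fin Tn.card)

def extend (w : Fin Tl1.card) : Fin Tn.card :=
  levelAbove g (if Tl1.ht w ≤ 1 then r
    else Tn.nthChild (extend (Tl1.parent w)) (Tl1.slotIdx (Tl1.parent w) w)) (h' (Tl1.ht w))
termination_by Tl1.ht w
decreasing_by exact (parent_imSucc (v := w) (by omega)).ht_eq ▸ Nat.lt_succ_self _

variable {g h' r}

theorem extend_of_ht_le_one {w : Fin Tl1.card} (hw : Tl1.ht w ≤ 1) :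
    extend g h' r w = levelAbove g r (h' (Tl1.ht w)) := by
  rw [extend, if_pos hw]

theorem extend_of_imSucc {p w : Fin Tl1.card} (hpw : Tl1.ImSucc p w) :
    extend g h' r w =
      levelAbove g (Tn.nthChild (extend g h' r p) (Tl1.slotIdx p w)) (h' (Tl1.ht w)) := by
  have := one_le_ht p
  rw [extend, if_neg (by rw [hpw.ht_eq]; omega), hpw.parent_eq]

theorem ht_extend (hTl1 : Regular Tl1 k (l + 1)) (hTn : Regular Tn k n)
    (hmaps : Set.MapsTo h' (Set.Icc 1 (l + 1)) (Set.Icc 1 n)) (w : Fin Tl1.card) :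
    Tn.ht (extend g h' r w) = h' (Tl1.ht w) := by
  have hh := hmaps ⟨one_le_ht w, hTl1.ht_le w⟩
  rw [extend]
  exact (ht_levelAbove_and_le hTn _ hh.1 hh.2).1

theorem slotFaithful_extend (hTl1 : Regular Tl1 k (l + 1)) (hTn : Regular Tn k n)
    (hmono : StrictMonoOn h' (Set.Icc 1 (l + 1)))
    (hmaps : Set.MapsTo h' (Set.Icc 1 (l + 1)) (Set.Icc 1 n)) :
    SlotFaithful Tl1 Tn h' (extend g h' r) := by
  refine ⟨ht_extend hTl1 hTn hmaps, fun p w hpw => ?_⟩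
  have hw : Tl1.ht w ∈ Set.Icc 1 (l + 1) := ⟨one_le_ht w, hTl1.ht_le w⟩
  have hp : Tl1.ht p ∈ Set.Icc 1 (l + 1) := ⟨one_le_ht p, hTl1.ht_le p⟩
  have hlt := hmono hp hw (by rw [hpw.ht_eq]; omega)
  rw [extend_of_imSucc hpw]
  refine (ht_levelAbove_and_le hTn _ (hmaps hw).1 (hmaps hw).2).2 ?_
  have := ht_nthChild_le (extend g h' r p) (Tl1.slotIdx p w)
  rw [ht_extend hTl1 hTn hmaps] at this
  omega

theorem exists_imSucc_extend_eq_anc (hTl1 : Regular Tl1 k (l + 1)) (hTn : Regular Tn k n)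
    (hmono : StrictMonoOn h' (Set.Icc 1 (l + 1)))
    (hmaps : Set.MapsTo h' (Set.Icc 1 (l + 1)) (Set.Icc 1 n))
    (hg : ∀ u v, g (Tl.meet u v) = Tn.meet (g u) (g v))
    (hrange : ∀ u, ∃ j ∈ Set.Icc 1 (l + 1), h' j = Tn.ht (g u)) {w : Fin Tl1.card}
    {v : Fin Tl.card} (hw : extend g h' r w = Tn.anc (g v) (h' (Tl1.ht w)))
    (hlt : h' (Tl1.ht w) < Tn.ht (g v)) :
    ∃ w', Tl1.ImSucc w w' ∧ extend g h' r w' = Tn.anc (g v) (h' (Tl1.ht w')) ∧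
      h' (Tl1.ht w') ≤ Tn.ht (g v) := by
  have hwI : Tl1.ht w ∈ Set.Icc 1 (l + 1) := ⟨one_le_ht w, hTl1.ht_le w⟩
  obtain ⟨j, hj, hjv⟩ := hrange v
  have hwj : Tl1.ht w < j := (hmono.lt_iff_lt hwI hj).1 (hjv ▸ hlt)
  have hw'I : Tl1.ht w + 1 ∈ Set.Icc 1 (l + 1) := ⟨by omega, by have := hj.2; omega⟩
  set y := extend g h' r w
  have hy : Tn.ht y = h' (Tl1.ht w) := ht_extend hTl1 hTn hmaps w
  set a := Tn.anc (g v) (Tn.ht y + 1)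
  have hya : Tn.ImSucc y a := imSucc_iff.2
    ⟨le_anc (hw ▸ anc_le _ _) (Nat.le_succ _) (by omega), ht_anc (by omega) (by omega)⟩
  have hs : Tn.slotIdx y a < Tl1.imCard w := by
    rw [hTl1.imCard_eq (by have := hj.2; omega), ← hTn.imCard_eq_of_imSucc hya]
    exact slotIdx_lt hya
  refine ⟨Tl1.nthChild w (Tn.slotIdx y a), nthChild_imSucc hs, ?_, ?_⟩
  · rw [extend_of_imSucc (nthChild_imSucc hs), slotIdx_nthChild hs, nthChild_slotIdx hya,
      ht_nthChild hs]
    refine levelAbove_eq hg (hmaps hw'I).1 (anc_le _ _)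
      (hjv ▸ hmono.monotoneOn hw'I hj hwj) fun u hu => ?_
    obtain ⟨ju, hju, hjuu⟩ := hrange u
    rw [← hjuu] at hu ⊢
    refine hmono.monotoneOn hw'I hju ?_
    have := (hmono.lt_iff_lt hwI hju).1 (by rw [ht_anc (by omega) (by omega)] at hu; omega)
    omega
  · rw [ht_nthChild hs, ← hjv]
    exact hmono.monotoneOn hw'I hj hwj

theorem exists_extend_eq (hTl1 : Regular Tl1 k (l + 1)) (hTn : Regular Tn k n)
    (hmono : StrictMonoOn h' (Set.Icc 1 (l + 1)))
    (hmaps : Set.MapsTo h' (Set.Icc 1 (l + 1)) (Set.Icc 1 n))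
    (hg : ∀ u v, g (Tl.meet u v) = Tn.meet (g u) (g v))
    (hrange : ∀ u, ∃ j ∈ Set.Icc 1 (l + 1), h' j = Tn.ht (g u)) (hr : Tn.ht r = 1)
    (v : Fin Tl.card) : ∃ w : Fin Tl1.card, extend g h' r w = g v := by
  have h1 : 1 ∈ Set.Icc 1 (l + 1) := ⟨le_rfl, by omega⟩
  have hle : ∀ u, h' 1 ≤ Tn.ht (g u) := fun u => by
    obtain ⟨j, hj, hju⟩ := hrange u
    exact hju ▸ hmono.monotoneOn h1 hj hj.1
  suffices ∀ w, extend g h' r w = Tn.anc (g v) (h' (Tl1.ht w)) →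
      h' (Tl1.ht w) ≤ Tn.ht (g v) → ∃ w', extend g h' r w' = g v by
    have x : Fin Tl1.card := ⟨0, Nat.pos_of_ne_zero (hTl1.card_ne_zero (by omega))⟩
    have hx : Tl1.ht (Tl1.anc x 1) = 1 := ht_anc le_rfl (one_le_ht x)
    refine this (Tl1.anc x 1) ?_ (by rw [hx]; exact hle v)
    rw [extend_of_ht_le_one hx.le, hx]
    exact levelAbove_eq hg (hmaps h1).1 (le_of_ht_eq_one hr _) (hle v) fun u _ => hle u
  intro w hw hwv
  induction hd : Tn.ht (g v) - h' (Tl1.ht w) using Nat.strong_induction_on generalizing w with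
  | _ d ih =>
    rcases hwv.lt_or_eq with hlt | heq
    · obtain ⟨w', hww', hw', hw'v⟩ :=
        exists_imSucc_extend_eq_anc hTl1 hTn hmono hmaps hg hrange hw hlt
      have := hmono ⟨one_le_ht w, hTl1.ht_le w⟩ ⟨one_le_ht w', hTl1.ht_le w'⟩
        (by rw [hww'.ht_eq]; omega)
      exact ih _ (by omega) w' hw' hw'v rfl
    · exact ⟨w, by rw [hw, heq, anc_self]⟩

theorem leafPres_extend (hTl1 : Regular Tl1 k (l + 1)) (hTn : Regular Tn k n)
    (hmaps : Set.MapsTo h' (Set.Icc 1 (l + 1)) (Set.Icc 1 n)) (htop : h' (l + 1) = n) :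
    LeafPres Tl1 Tn (extend g h' r) := fun w hw => by
  rw [hTn.leaf_iff, ht_extend hTl1 hTn hmaps, hTl1.leaf_iff.1 hw, htop]

end Extension

theorem card_image_ht_le {S T : OTree} {k l : ℕ} (hS : Regular S k l)
    {g : Fin S.card → Fin T.card} (hg : Strong S T g) :
    (Finset.univ.image fun v => T.ht (g v)).card ≤ l := by
  calc _ ≤ (Finset.Icc 1 l).card := Finset.card_le_card_of_surjOn
        (fun j => if h : ∃ v, S.ht v = j then T.ht (g h.choose) else 0) fun a ha => by
          obtain ⟨v, -, rfl⟩ := Finset.mem_image.1 ha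
          refine ⟨S.ht v, by simpa using ⟨one_le_ht v, hS.ht_le v⟩, ?_⟩
          simp only [dif_pos (⟨v, rfl⟩ : ∃ u, S.ht u = S.ht v)]
          exact hg _ _ (Exists.choose_spec (⟨v, rfl⟩ : ∃ u, S.ht u = S.ht v))
    _ = l := by simp

theorem exists_factorization {k l n : ℕ} (hln : l < n) {Tl Tl1 Tn : OTree}
    (hTl : Regular Tl k l) (hTl1 : Regular Tl1 k (l + 1)) (hTn : Regular Tn k n)
    {g : Fin Tl.card → Fin Tn.card} (hg : IsEmb Tl Tn g) (hgs : Strong Tl Tn g) :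
    ∃ (g₁ : Fin Tl.card → Fin Tl1.card) (g₂ : Fin Tl1.card → Fin Tn.card),
      IsEmb Tl Tl1 g₁ ∧ Strong Tl Tl1 g₁ ∧ IsEmb Tl1 Tn g₂ ∧ Strong Tl1 Tn g₂ ∧
      LeafPres Tl1 Tn g₂ ∧ g = g₂ ∘ g₁ ∧
      (LeafPres Tl Tn g → LeafPres Tl Tl1 g₁) := by
  obtain ⟨h', hmono, hmaps, hrange, htop⟩ := exists_strictMonoOn_of_card_le
    (A := Finset.univ.image fun v => Tn.ht (g v))
    (by simpa [Finset.image_subset_iff] using fun v => ⟨one_le_ht (g v), hTn.ht_le (g v)⟩)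
    (card_image_ht_le hTl hgs) hln
  replace hrange : ∀ u, ∃ j ∈ Set.Icc 1 (l + 1), h' j = Tn.ht (g u) := fun u =>
    hrange _ (Finset.mem_image_of_mem _ (Finset.mem_univ u))
  have x : Fin Tn.card := ⟨0, Nat.pos_of_ne_zero (hTn.card_ne_zero (by omega))⟩
  have hr : Tn.ht (Tn.anc x 1) = 1 := ht_anc le_rfl (one_le_ht x)
  have hG := slotFaithful_extend (g := g) (r := Tn.anc x 1) hTl1 hTn hmono hmaps
  obtain ⟨g₁, hg₁, hcomp⟩ := exists_isEmb_comp_eq hTl hTl1 hg (hG.isEmb hTl1 hTn hmono)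
    (exists_extend_eq hTl1 hTn hmono hmaps hg.2.1 hrange hr)
  have hlevel : ∀ v, h' (Tl1.ht (g₁ v)) = Tn.ht (g v) := fun v => by
    rw [hcomp, Function.comp_apply, hG.ht_map]
  have hmem : ∀ w, Tl1.ht w ∈ Set.Icc 1 (l + 1) := fun w => ⟨one_le_ht w, hTl1.ht_le w⟩
  refine ⟨g₁, _, hg₁, fun v w hvw => hmono.injOn (hmem _) (hmem _) ?_,
    hG.isEmb hTl1 hTn hmono, fun v w hvw => by rw [hG.ht_map, hG.ht_map, hvw],
    leafPres_extend hTl1 hTn hmaps htop, hcomp, fun hgl v hv => ?_⟩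
  · rw [hlevel, hlevel, hgs v w hvw]
  · rw [hTl1.leaf_iff]
    refine hmono.injOn (hmem _) ⟨by omega, le_rfl⟩ ?_
    rw [hlevel, htop, ← hTn.leaf_iff.1 (hgl v hv)]

end OTree

end

theorem strong_embedding_factors_general (k l n : ℕ) (hln : l < n)
    (Tl Tl1 Tn : OTree) (hTl : Regular Tl k l) (hTl1 : Regular Tl1 k (l + 1))
    (hTn : Regular Tn k n) :
    (∀ g : Fin Tl.card → Fin Tn.card, IsEmb Tl Tn g → Strong Tl Tn g →
      ∃ (g₁ : Fin Tl.card → Fin Tl1.card) (g₂ : Fin Tl1.card → Fin Tn.card),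
        IsEmb Tl Tl1 g₁ ∧ Strong Tl Tl1 g₁ ∧ IsEmb Tl1 Tn g₂ ∧ Strong Tl1 Tn g₂ ∧
        g = g₂ ∘ g₁) ∧
    (∀ g : Fin Tl.card → Fin Tn.card, IsEmb Tl Tn g → Strong Tl Tn g → LeafPres Tl Tn g →
      ∃ (g₁ : Fin Tl.card → Fin Tl1.card) (g₂ : Fin Tl1.card → Fin Tn.card),
        IsEmb Tl Tl1 g₁ ∧ Strong Tl Tl1 g₁ ∧ LeafPres Tl Tl1 g₁ ∧
        IsEmb Tl1 Tn g₂ ∧ Strong Tl1 Tn g₂ ∧ LeafPres Tl1 Tn g₂ ∧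
        g = g₂ ∘ g₁) := by
  refine ⟨fun g hg hgs => ?_, fun g hg hgs hgl => ?_⟩
  · obtain ⟨g₁, g₂, h₁, hs₁, h₂, hs₂, -, hcomp, -⟩ :=
      OTree.exists_factorization hln hTl hTl1 hTn hg hgs
    exact ⟨g₁, g₂, h₁, hs₁, h₂, hs₂, hcomp⟩
  · obtain ⟨g₁, g₂, h₁, hs₁, h₂, hs₂, hl₂, hcomp, hl₁⟩ :=
      OTree.exists_factorization hln hTl hTl1 hTn hg hgs
    exact ⟨g₁, g₂, h₁, hs₁, hl₁ hgl, h₂, hs₂, hl₂, hcomp⟩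

/-- Every strong embedding `g : T^l → T^n` of regular trees with branching `k ≥ 1` and
`l < n` factors as `g = g₂ ∘ g₁` through `T^{l+1}` with `g₁`, `g₂` strong embeddings, and
likewise for strong leaf preserving embeddings. -/
theorem strong_embedding_factors (k l n : ℕ) (hk : 1 ≤ k) (hln : l < n)
    (Tl Tl1 Tn : OTree) (hTl : Regular Tl k l) (hTl1 : Regular Tl1 k (l + 1))
    (hTn : Regular Tn k n) :
    (∀ g : Fin Tl.card → Fin Tn.card, IsEmb Tl Tn g → Strong Tl Tn g →
      ∃ (g₁ : Fin Tl.card → Fin Tl1.card) (g₂ : Fin Tl1.card → Fin Tn.card),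
        IsEmb Tl Tl1 g₁ ∧ Strong Tl Tl1 g₁ ∧ IsEmb Tl1 Tn g₂ ∧ Strong Tl1 Tn g₂ ∧
        g = g₂ ∘ g₁) ∧
    (∀ g : Fin Tl.card → Fin Tn.card, IsEmb Tl Tn g → Strong Tl Tn g → LeafPres Tl Tn g →
      ∃ (g₁ : Fin Tl.card → Fin Tl1.card) (g₂ : Fin Tl1.card → Fin Tn.card),
        IsEmb Tl Tl1 g₁ ∧ Strong Tl Tl1 g₁ ∧ LeafPres Tl Tl1 g₁ ∧
        IsEmb Tl1 Tn g₂ ∧ Strong Tl1 Tn g₂ ∧ LeafPres Tl1 Tn g₂ ∧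
        g = g₂ ∘ g₁) :=
  strong_embedding_factors_general k l n hln Tl Tl1 Tn hTl hTl1 hTn
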